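/- Let F : Ω → L(ℂⁿ, H) be holomorphic with h = F*F invertible and P = F h^{-1} F*. Then at every λ ∈ Ω, the squared Hilbert–Schmidt norm of ∂P(λ) equals −Tr(K_P(λ)), where K_P = −∂̄(h^{-1}∂h); that is, ‖∂P(λ)‖²_{HS} = −Tr K_P(λ). -/

import Mathlib

open Complex ContinuousLinearMap

/-- Wirtinger derivative ∂ = ∂/∂λ. -/
noncomputable def pd {E : Type*} [NormedAddCommGroup E] [NormedSpace ℂ E]
    (f : ℂ → E) : ℂ → E :=
  fun z => (2⁻¹ : ℂ) • (fderiv ℝ f z 1 - Complex.I • fderiv ℝ f z Complex.I)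

/-- Wirtinger derivative ∂̄ = ∂/∂λ̄. -/
noncomputable def pdbar {E : Type*} [NormedAddCommGroup E] [NormedSpace ℂ E]
    (f : ℂ → E) : ℂ → E :=
  fun z => (2⁻¹ : ℂ) • (fderiv ℝ f z 1 + Complex.I • fderiv ℝ f z Complex.I)

/-! With `h = F†F`, `P = F h⁻¹ F†` and `A = F'`, the Wirtinger product rule and the holomorphy of
`F` give `∂P = (1 - P) A h⁻¹ F†` and `K_P = -∂̄(h⁻¹ F† A) = -h⁻¹ A† (1 - P) A`. Writing
`∂P = g F†` with `g = (1 - P) A h⁻¹`, the Hilbert–Schmidt norm is computed in a Hilbert basis as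
`Tr(g† g F† F)`, a trace on `ℂⁿ`; as `1 - P` is a self-adjoint idempotent this is
`Tr(h⁻¹ A† (1 - P) A) = -Tr K_P`. -/

open scoped Ring InnerProduct InnerProductSpace Topology

section Wirtinger

variable {E F G : Type*} [NormedAddCommGroup E] [NormedSpace ℂ E]
  [NormedAddCommGroup F] [NormedSpace ℂ F] [NormedAddCommGroup G] [NormedSpace ℂ G]

theorem Filter.EventuallyEq.pd_eq {f g : ℂ → E} {z : ℂ} (h : f =ᶠ[𝓝 z] g) :
    pd f z = pd g z := by
  simp only [pd, h.fderiv_eq]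

theorem Filter.EventuallyEq.pdbar_eq {f g : ℂ → E} {z : ℂ} (h : f =ᶠ[𝓝 z] g) :
    pdbar f z = pdbar g z := by
  simp only [pdbar, h.fderiv_eq]

theorem DifferentiableAt.fderiv_real_apply_I {f : ℂ → E} {z : ℂ} (h : DifferentiableAt ℂ f z) :
    fderiv ℝ f z I = I • fderiv ℝ f z 1 := by
  rw [h.fderiv_restrictScalars ℝ]
  simp

theorem DifferentiableAt.pd_eq_deriv {f : ℂ → E} {z : ℂ} (h : DifferentiableAt ℂ f z) :
    pd f z = deriv f z := by
  rw [pd, h.fderiv_real_apply_I, smul_smul, I_mul_I, h.fderiv_restrictScalars ℝ]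
  simp only [ContinuousLinearMap.coe_restrictScalars', fderiv_apply_one_eq_deriv]
  module

theorem DifferentiableAt.pdbar_eq_zero {f : ℂ → E} {z : ℂ} (h : DifferentiableAt ℂ f z) :
    pdbar f z = 0 := by
  rw [pdbar, h.fderiv_real_apply_I, smul_smul, I_mul_I]
  module

theorem fderiv_real_clm_comp {f : ℂ → F →L[ℂ] G} {g : ℂ → E →L[ℂ] F} {z : ℂ}
    (hf : DifferentiableAt ℝ f z) (hg : DifferentiableAt ℝ g z) (c : ℂ) :
    fderiv ℝ (fun w => f w ∘L g w) z c = fderiv ℝ f z c ∘L g z + f z ∘L fderiv ℝ g z c := by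
  have := ((compL ℂ E F G).bilinearRestrictScalars ℝ).hasFDerivAt_of_bilinear
    hf.hasFDerivAt hg.hasFDerivAt
  rw [show (fun w => f w ∘L g w) = fun w => (compL ℂ E F G).bilinearRestrictScalars ℝ (f w) (g w)
    from rfl, this.fderiv]
  simp [add_comm]

theorem pd_clm_comp {f : ℂ → F →L[ℂ] G} {g : ℂ → E →L[ℂ] F} {z : ℂ}
    (hf : DifferentiableAt ℝ f z) (hg : DifferentiableAt ℝ g z) :
    pd (fun w => f w ∘L g w) z = pd f z ∘L g z + f z ∘L pd g z := by
  simp only [pd, fderiv_real_clm_comp hf hg, smul_comp, comp_smul, sub_comp, comp_sub]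
  module

theorem pdbar_clm_comp {f : ℂ → F →L[ℂ] G} {g : ℂ → E →L[ℂ] F} {z : ℂ}
    (hf : DifferentiableAt ℝ f z) (hg : DifferentiableAt ℝ g z) :
    pdbar (fun w => f w ∘L g w) z = pdbar f z ∘L g z + f z ∘L pdbar g z := by
  simp only [pdbar, fderiv_real_clm_comp hf hg, smul_comp, comp_smul, add_comp, comp_add]
  module

theorem DifferentiableAt.real_clm_comp {f : ℂ → F →L[ℂ] G} {g : ℂ → E →L[ℂ] F} {z : ℂ}
    (hf : DifferentiableAt ℝ f z) (hg : DifferentiableAt ℝ g z) :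
    DifferentiableAt ℝ (fun w => f w ∘L g w) z :=
  (((compL ℂ E F G).bilinearRestrictScalars ℝ).hasFDerivAt_of_bilinear
    hf.hasFDerivAt hg.hasFDerivAt).differentiableAt

end Wirtinger

section Inverse

variable {R : Type*} [NormedRing R] [NormedAlgebra ℂ R] [CompleteSpace R]

theorem fderiv_real_ringInverse {f : ℂ → R} {z : ℂ} (hf : DifferentiableAt ℝ f z)
    (hu : IsUnit (f z)) (c : ℂ) :
    fderiv ℝ (fun w => (f w)⁻¹ʳ) z c = -((f z)⁻¹ʳ * fderiv ℝ f z c * (f z)⁻¹ʳ) := by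
  have := HasFDerivAt.comp (g := Ring.inverse) z (hasFDerivAt_ringInverse (𝕜 := ℝ) hu.unit)
    hf.hasFDerivAt
  rw [show (fun w => (f w)⁻¹ʳ) = Ring.inverse ∘ f from rfl, this.fderiv, ← Ring.inverse_unit,
    hu.unit_spec]
  simp

theorem pd_ringInverse {f : ℂ → R} {z : ℂ} (hf : DifferentiableAt ℝ f z) (hu : IsUnit (f z)) :
    pd (fun w => (f w)⁻¹ʳ) z = -((f z)⁻¹ʳ * pd f z * (f z)⁻¹ʳ) := by
  simp only [pd, fderiv_real_ringInverse hf hu, mul_smul_comm, smul_mul_assoc, mul_sub, sub_mul]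
  module

theorem pdbar_ringInverse {f : ℂ → R} {z : ℂ} (hf : DifferentiableAt ℝ f z) (hu : IsUnit (f z)) :
    pdbar (fun w => (f w)⁻¹ʳ) z = -((f z)⁻¹ʳ * pdbar f z * (f z)⁻¹ʳ) := by
  simp only [pdbar, fderiv_real_ringInverse hf hu, mul_smul_comm, smul_mul_assoc, mul_add,
    add_mul]
  module

end Inverse

section Adjoint

variable {E F : Type*} [NormedAddCommGroup E] [InnerProductSpace ℂ E] [CompleteSpace E]
  [NormedAddCommGroup F] [InnerProductSpace ℂ F] [CompleteSpace F]

noncomputable def adjointRealLinearIsometryEquiv : (E →L[ℂ] F) ≃ₗᵢ[ℝ] (F →L[ℂ] E) :=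
  (adjoint : (E →L[ℂ] F) ≃ₗᵢ⋆[ℂ] _).toIsometryEquiv.toRealLinearIsometryEquivOfMapZero
    (map_zero (adjoint : (E →L[ℂ] F) ≃ₗᵢ⋆[ℂ] _))

theorem fderiv_real_adjoint {f : ℂ → E →L[ℂ] F} {z : ℂ} (hf : DifferentiableAt ℝ f z) (c : ℂ) :
    fderiv ℝ (fun w => (f w)†) z c = (fderiv ℝ f z c)† := by
  have := (adjointRealLinearIsometryEquiv (E := E) (F := F)).hasFDerivAt.comp z hf.hasFDerivAt
  exact congr($this.fderiv c)

theorem DifferentiableAt.real_adjoint {f : ℂ → E →L[ℂ] F} {z : ℂ} (hf : DifferentiableAt ℝ f z) :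
    DifferentiableAt ℝ (fun w => (f w)†) z :=
  ((adjointRealLinearIsometryEquiv (E := E) (F := F)).hasFDerivAt.comp z
    hf.hasFDerivAt).differentiableAt

theorem pd_adjoint {f : ℂ → E →L[ℂ] F} {z : ℂ} (hf : DifferentiableAt ℝ f z) :
    pd (fun w => (f w)†) z = (pdbar f z)† := by
  simp only [pd, pdbar, fderiv_real_adjoint hf, map_smulₛₗ, map_add, conj_I, map_inv₀, map_ofNat]
  module

theorem pdbar_adjoint {f : ℂ → E →L[ℂ] F} {z : ℂ} (hf : DifferentiableAt ℝ f z) :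
    pdbar (fun w => (f w)†) z = (pd f z)† := by
  simp only [pd, pdbar, fderiv_real_adjoint hf, map_smulₛₗ, map_sub, conj_I, map_inv₀, map_ofNat]
  module

end Adjoint

section RangeProjection

variable {𝕜 E H K : Type*} [RCLike 𝕜]
  [NormedAddCommGroup E] [InnerProductSpace 𝕜 E] [CompleteSpace E]
  [NormedAddCommGroup H] [InnerProductSpace 𝕜 H] [CompleteSpace H]
  [NormedAddCommGroup K] [InnerProductSpace 𝕜 K] [CompleteSpace K]

noncomputable def gram (T : E →L[𝕜] H) : E →L[𝕜] E := T† ∘L T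

noncomputable def rangeProj (T : E →L[𝕜] H) : H →L[𝕜] H := T ∘L (gram T)⁻¹ʳ ∘L T†

theorem isSelfAdjoint_gram (T : E →L[𝕜] H) : IsSelfAdjoint (gram T) := by
  rw [isSelfAdjoint_iff', gram, adjoint_comp, adjoint_adjoint]

theorem isSelfAdjoint_rangeProj (T : E →L[𝕜] H) : IsSelfAdjoint (rangeProj T) := by
  rw [isSelfAdjoint_iff', rangeProj, adjoint_comp, adjoint_comp, adjoint_adjoint,
    isSelfAdjoint_iff'.mp (isSelfAdjoint_gram T).ringInverse, comp_assoc]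

theorem rangeProj_comp_self {T : E →L[𝕜] H} (hT : IsUnit (gram T)) : rangeProj T ∘L T = T := by
  change T ∘L ((gram T)⁻¹ʳ * gram T) = T
  rw [Ring.inverse_mul_cancel _ hT, one_def, comp_id]

theorem isIdempotentElem_rangeProj {T : E →L[𝕜] H} (hT : IsUnit (gram T)) :
    IsIdempotentElem (rangeProj T) := by
  change (rangeProj T ∘L T) ∘L (gram T)⁻¹ʳ ∘L T† = rangeProj T
  rw [rangeProj_comp_self hT]
  rfl

theorem adjoint_comp_self_comp_gram_of_compl_rangeProj {T : E →L[𝕜] H} (hT : IsUnit (gram T))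
    (A : E →L[𝕜] H) :
    ((1 - rangeProj T) ∘L A ∘L (gram T)⁻¹ʳ)† ∘L ((1 - rangeProj T) ∘L A ∘L (gram T)⁻¹ʳ)
        ∘L gram T =
      (gram T)⁻¹ʳ ∘L A† ∘L (1 - rangeProj T) ∘L A := by
  have hQ : (1 - rangeProj T)† = 1 - rangeProj T :=
    isSelfAdjoint_iff'.mp ((IsSelfAdjoint.one _).sub (isSelfAdjoint_rangeProj T))
  rw [adjoint_comp, adjoint_comp, hQ, isSelfAdjoint_iff'.mp (isSelfAdjoint_gram T).ringInverse]
  calc _ = (gram T)⁻¹ʳ ∘L A† ∘L ((1 - rangeProj T) * (1 - rangeProj T)) ∘L A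
        ∘L ((gram T)⁻¹ʳ * gram T) := by simp only [mul_def, comp_assoc]
    _ = _ := by
      rw [(isIdempotentElem_rangeProj hT).one_sub.eq, Ring.inverse_mul_cancel _ hT]
      rfl

theorem HilbertBasis.hasSum_norm_sq_apply_adjoint [FiniteDimensional 𝕜 E] {ι : Type*}
    (σ : HilbertBasis ι 𝕜 H) (g : E →L[𝕜] K) (T : E →L[𝕜] H) :
    HasSum (fun i => ((‖g (adjoint T (σ i))‖ ^ 2 : ℝ) : 𝕜))
      (LinearMap.trace 𝕜 E (g† ∘L g ∘L gram T : E →L[𝕜] E)) := by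
  set b := stdOrthonormalBasis 𝕜 E
  have hterm : ∀ i, ((‖g (adjoint T (σ i))‖ ^ 2 : ℝ) : 𝕜)
      = ∑ k, ⟪T (adjoint (g† ∘L g) (b k)), σ i⟫_𝕜 * ⟪σ i, T (b k)⟫_𝕜 := by
    intro i
    rw [RCLike.ofReal_pow, ← inner_self_eq_norm_sq_to_K, ← adjoint_inner_right,
      ← b.sum_inner_mul_inner (adjoint T (σ i))]
    refine Finset.sum_congr rfl fun k _ => ?_
    rw [adjoint_inner_left T, ← adjoint_inner_right T, adjoint_inner_left (g† ∘L g), mul_comm]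
    rfl
  rw [funext hterm, LinearMap.trace_eq_sum_inner _ b]
  refine hasSum_sum fun k _ => ?_
  convert σ.hasSum_inner_mul_inner _ _ using 1
  rw [← adjoint_inner_right T, adjoint_inner_left]
  rfl

end RangeProjection

section Holomorphic

variable {E H : Type*} [NormedAddCommGroup E] [InnerProductSpace ℂ E] [CompleteSpace E]
  [NormedAddCommGroup H] [InnerProductSpace ℂ H] [CompleteSpace H] {F : ℂ → E →L[ℂ] H} {z : ℂ}

theorem DifferentiableAt.real_gram (hF : DifferentiableAt ℝ F z) :
    DifferentiableAt ℝ (fun w => gram (F w)) z :=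
  hF.real_adjoint.real_clm_comp hF

theorem pd_gram (hF : DifferentiableAt ℂ F z) :
    pd (fun w => gram (F w)) z = (F z)† ∘L deriv F z := by
  have hR := hF.restrictScalars ℝ
  change pd (fun w => (F w)† ∘L F w) z = _
  rw [pd_clm_comp hR.real_adjoint hR, pd_adjoint hR, hF.pdbar_eq_zero, hF.pd_eq_deriv, map_zero,
    zero_comp, zero_add]

theorem pdbar_gram (hF : DifferentiableAt ℂ F z) :
    pdbar (fun w => gram (F w)) z = (deriv F z)† ∘L F z := by
  have hR := hF.restrictScalars ℝ
  change pdbar (fun w => (F w)† ∘L F w) z = _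
  rw [pdbar_clm_comp hR.real_adjoint hR, pdbar_adjoint hR, hF.pdbar_eq_zero, hF.pd_eq_deriv,
    comp_zero, add_zero]

theorem pd_rangeProj (hF : DifferentiableAt ℂ F z) (hu : IsUnit (gram (F z))) :
    pd (fun w => rangeProj (F w)) z =
      (1 - rangeProj (F z)) ∘L deriv F z ∘L (gram (F z))⁻¹ʳ ∘L (F z)† := by
  have hR := hF.restrictScalars ℝ
  have hinv : DifferentiableAt ℝ (fun w => (gram (F w))⁻¹ʳ) z := hR.real_gram.inverse hu
  change pd (fun w => F w ∘L (gram (F w))⁻¹ʳ ∘L (F w)†) z = _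
  rw [pd_clm_comp hR (hinv.real_clm_comp hR.real_adjoint), pd_clm_comp hinv hR.real_adjoint,
    pd_ringInverse hR.real_gram hu, pd_gram hF, pd_adjoint hR, hF.pdbar_eq_zero, hF.pd_eq_deriv]
  simp only [rangeProj, map_zero, comp_zero, add_zero, mul_def, neg_comp, comp_neg, sub_comp,
    one_def, id_comp, comp_assoc]
  abel

theorem pdbar_inverse_gram_mul_pd_gram (hF : AnalyticAt ℂ F z) (hu : IsUnit (gram (F z))) :
    pdbar (fun w => (gram (F w))⁻¹ʳ * pd (fun v => gram (F v)) w) z =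
      (gram (F z))⁻¹ʳ ∘L (deriv F z)† ∘L (1 - rangeProj (F z)) ∘L deriv F z := by
  have hR := hF.differentiableAt.restrictScalars ℝ
  have hF' : DifferentiableAt ℝ (deriv F) z := hF.deriv.differentiableAt.restrictScalars ℝ
  have hinv : DifferentiableAt ℝ (fun w => (gram (F w))⁻¹ʳ) z := hR.real_gram.inverse hu
  have hpd : (fun w => (gram (F w))⁻¹ʳ * pd (fun v => gram (F v)) w) =ᶠ[𝓝 z]
      fun w => (gram (F w))⁻¹ʳ ∘L (F w)† ∘L deriv F w :=
    hF.eventually_analyticAt.mono fun w hw => by dsimp only; rw [pd_gram hw.differentiableAt]; rfl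
  rw [hpd.pdbar_eq, pdbar_clm_comp hinv (hR.real_adjoint.real_clm_comp hF'),
    pdbar_ringInverse hR.real_gram hu, pdbar_gram hF.differentiableAt,
    pdbar_clm_comp hR.real_adjoint hF', pdbar_adjoint hR, hF.differentiableAt.pd_eq_deriv,
    hF.deriv.differentiableAt.pdbar_eq_zero]
  simp only [rangeProj, comp_zero, add_zero, mul_def, neg_comp, comp_sub, sub_comp, one_def,
    id_comp, comp_assoc]
  abel

end Holomorphic

theorem stmt17 {n : ℕ}
    {H : Type*} [NormedAddCommGroup H] [InnerProductSpace ℂ H] [CompleteSpace H]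
    (Ω : Set ℂ) (hΩ : IsOpen Ω)
    (F : ℂ → EuclideanSpace ℂ (Fin n) →L[ℂ] H)
    (hF : DifferentiableOn ℂ F Ω)
    (h : ℂ → EuclideanSpace ℂ (Fin n) →L[ℂ] EuclideanSpace ℂ (Fin n))
    (hdef : ∀ z ∈ Ω, h z = ContinuousLinearMap.adjoint (F z) ∘L F z)
    (hinv : ∀ z ∈ Ω, IsUnit (h z))
    (hi : ℂ → EuclideanSpace ℂ (Fin n) →L[ℂ] EuclideanSpace ℂ (Fin n))
    (hhi : ∀ z ∈ Ω, hi z = Ring.inverse (h z))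
    (P : ℂ → H →L[ℂ] H)
    (hP : ∀ z ∈ Ω, P z = F z ∘L hi z ∘L ContinuousLinearMap.adjoint (F z))
    (KP : ℂ → EuclideanSpace ℂ (Fin n) →L[ℂ] EuclideanSpace ℂ (Fin n))
    (hKP : ∀ z ∈ Ω, KP z = -(pdbar (fun w => hi w * pd h w) z))
    {ι : Type*} (σ : HilbertBasis ι ℂ H) :
    ∀ z ∈ Ω,
      ((∑' i : ι, ‖pd P z (σ i)‖ ^ 2 : ℝ) : ℂ) =
        -(LinearMap.trace ℂ (EuclideanSpace ℂ (Fin n)) (KP z : _ →ₗ[ℂ] _)) := by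
  intro z hz
  have hΩz : Ω ∈ 𝓝 z := hΩ.mem_nhds hz
  have hFz : AnalyticAt ℂ F z := hF.analyticAt hΩz
  have hunit : IsUnit (gram (F z)) := by rw [gram, ← hdef z hz]; exact hinv z hz
  have hPz : P =ᶠ[𝓝 z] fun w => rangeProj (F w) :=
    Filter.eventually_of_mem hΩz fun w hw => by rw [hP w hw, hhi w hw, hdef w hw]; rfl
  have hgram : ∀ w ∈ Ω, h =ᶠ[𝓝 w] fun v => gram (F v) :=
    fun w hw => Filter.eventually_of_mem (hΩ.mem_nhds hw) hdef
  have hKz : (fun w => hi w * pd h w) =ᶠ[𝓝 z]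
      fun w => (gram (F w))⁻¹ʳ * pd (fun v => gram (F v)) w :=
    Filter.eventually_of_mem hΩz fun w hw => by
      dsimp only
      rw [hhi w hw, hdef w hw, (hgram w hw).pd_eq]; rfl
  rw [hKP z hz, hKz.pdbar_eq, pdbar_inverse_gram_mul_pd_gram hFz hunit, toLinearMap_neg, map_neg,
    neg_neg, hPz.pd_eq, pd_rangeProj hFz.differentiableAt hunit, ofReal_tsum]
  have hHS := σ.hasSum_norm_sq_apply_adjoint
    ((1 - rangeProj (F z)) ∘L deriv F z ∘L (gram (F z))⁻¹ʳ) (F z)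
  rw [adjoint_comp_self_comp_gram_of_compl_rangeProj hunit] at hHS
  exact hHS.tsum_eq
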